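/- arXiv:1606.03573 — 2 statements merged into one kernel-verified Lean document; each statement's English description precedes it below -/
import Mathlib

section
/- With t(u,v)=c^2/((u-v)(u-v+c)): ∑_{j=1}^a t(u^C_j, x_k) Ω_j = h(ū^B, x_k)/h(ū^C, x_k) - g(x_k, ū^C)/g(x_k, ū^B), where Ω_j = (1/g(u^C_j, ū^B)) ∏_{l≠j} g(u^C_j, u^C_l). -/
open Finset

noncomputable def gg (c u v : ℂ) : ℂ := c / (u - v)
noncomputable def hh (c u v : ℂ) : ℂ := (u - v + c) / c
noncomputable def tt (c u v : ℂ) : ℂ := c ^ 2 / ((u - v) * (u - v + c))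

/-!
With `R(z) = ∏ (z - u^B_l) / ∏ (z - u^C_l)`, the two terms on the right are `R(x - c)` and `R(x)`.
Since `t(u, x) = c ((x - c - u)⁻¹ - (x - u)⁻¹)` and `Ω_j = c⁻¹ w_j ∏_l (u^C_j - u^B_l)` with `w_j` the
barycentric weight of the node `u^C_j`, the left side is the difference at `z = x - c` and `z = x`
of the partial fraction expansion `R(z) = 1 + ∑_j w_j ∏_l (u^C_j - u^B_l) / (z - u^C_j)`.
-/

open Lagrange Polynomial

namespace Lagrange

variable {F ι : Type*} [Field F] [DecidableEq ι] {s : Finset ι} {v : ι → F}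

/-- Numerator minus denominator has degree `< #s`, so it is its own interpolant at the nodes. -/
theorem eval_nodal_div_eval_nodal (hvs : Set.InjOn v s) {x : F} (hx : ∀ i ∈ s, x ≠ v i)
    (b : ι → F) :
    (nodal s b).eval x / (nodal s v).eval x =
      1 + ∑ i ∈ s, nodalWeight s v i * (x - v i)⁻¹ * (nodal s b).eval (v i) := by
  have hdeg : (nodal s b - nodal s v).degree < #s := by
    rw [← degree_nodal (v := b)]
    exact degree_sub_lt_left (by rw [degree_nodal, degree_nodal]) nodal_ne_zero
      (by rw [nodal_monic.leadingCoeff, nodal_monic.leadingCoeff])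
  have hinterp := congrArg (eval x) (eq_interpolate hvs hdeg)
  have hvals : ∀ i ∈ s, (nodal s b - nodal s v).eval (v i) = (nodal s b).eval (v i) := by
    intro i hi
    rw [eval_sub, eval_nodal_at_node hi, sub_zero]
  rw [eval_interpolate_not_at_node _ hx, eval_sub, sum_congr rfl fun i hi => by rw [hvals i hi]]
    at hinterp
  rw [div_eq_iff (eval_nodal_not_at_node hx)]
  linear_combination hinterp

end Lagrange

theorem tt_eq_mul_inv_sub_inv {c u x : ℂ} (hux : u ≠ x) (hc : u - x + c ≠ 0) :
    tt c u x = c * ((x - c - u)⁻¹ - (x - u)⁻¹) := by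
  have h₁ : x - u ≠ 0 := sub_ne_zero_of_ne hux.symm
  have h₂ : x - c - u ≠ 0 := fun h => hc (by linear_combination -h)
  rw [tt, inv_sub_inv h₂ h₁]
  field_simp
  ring

section RationalFunctions

variable {ι : Type*} (s : Finset ι)

theorem prod_gg (c u : ℂ) (b : ι → ℂ) : ∏ l ∈ s, gg c u (b l) = c ^ #s / ∏ l ∈ s, (u - b l) := by
  simp only [gg, prod_div_distrib, prod_const]

theorem prod_gg_div_prod_gg {c : ℂ} (hc : c ≠ 0) (x : ℂ) (v b : ι → ℂ) :
    (∏ l ∈ s, gg c x (v l)) / ∏ l ∈ s, gg c x (b l) = (nodal s b).eval x / (nodal s v).eval x := by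
  rw [prod_gg, prod_gg, div_div_div_cancel_left' _ _ (pow_ne_zero _ hc), eval_nodal, eval_nodal]

theorem prod_hh_div_prod_hh {c : ℂ} (hc : c ≠ 0) (x : ℂ) (b v : ι → ℂ) :
    (∏ l ∈ s, hh c (b l) x) / ∏ l ∈ s, hh c (v l) x =
      (nodal s b).eval (x - c) / (nodal s v).eval (x - c) := by
  have hh_eq : ∀ u, hh c u x = (x - c - u) / -c := fun u => by
    rw [hh, div_neg, ← neg_div]; ring
  simp only [hh_eq, prod_div_distrib, prod_const]
  rw [div_div_div_cancel_right₀ (pow_ne_zero _ (neg_ne_zero.mpr hc)), eval_nodal, eval_nodal]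

variable [DecidableEq ι]

theorem one_div_prod_gg_mul_prod_erase_gg {c : ℂ} (hc : c ≠ 0) (v b : ι → ℂ) {j : ι}
    (hj : j ∈ s) :
    (1 / ∏ l ∈ s, gg c (v j) (b l)) * ∏ l ∈ s.erase j, gg c (v j) (v l) =
      c⁻¹ * nodalWeight s v j * (nodal s b).eval (v j) := by
  rw [prod_gg, prod_gg, one_div_div, nodalWeight, prod_inv_distrib, eval_nodal,
    ← card_erase_add_one hj, pow_succ]
  field_simp

end RationalFunctions

theorem sum_t_Omega_general (c : ℂ) (hc : c ≠ 0) (a : ℕ) (x : ℂ)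
    (uB uC : Fin a → ℂ) (huC : Function.Injective uC)
    (h1 : ∀ j, uC j ≠ x) (h2 : ∀ j, uC j - x + c ≠ 0) :
    ∑ j, tt c (uC j) x *
        ((1 / ∏ l, gg c (uC j) (uB l)) * ∏ l ∈ univ.erase j, gg c (uC j) (uC l)) =
      (∏ l, hh c (uB l) x) / (∏ l, hh c (uC l) x) -
        (∏ l, gg c x (uC l)) / (∏ l, gg c x (uB l)) := by
  have partial_fractions := fun z => eval_nodal_div_eval_nodal (s := univ) huC.injOn (x := z)
  rw [prod_hh_div_prod_hh _ hc, prod_gg_div_prod_gg _ hc,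
    partial_fractions x fun j _ => (h1 j).symm,
    partial_fractions (x - c) fun j _ h => h2 j (by rw [← h]; ring), add_sub_add_left_eq_sub,
    ← sum_sub_distrib]
  refine sum_congr rfl fun j hj => ?_
  rw [tt_eq_mul_inv_sub_inv (h1 j) (h2 j), one_div_prod_gg_mul_prod_erase_gg _ hc _ _ hj]
  field_simp

theorem sum_t_Omega (c : ℂ) (hc : c ≠ 0) (a : ℕ) (ha : 1 ≤ a) (x : ℂ)
    (uB uC : Fin a → ℂ) (huC : Function.Injective uC)
    (h1 : ∀ j, uC j ≠ x) (h2 : ∀ j, uC j - x + c ≠ 0)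
    (h3 : ∀ l, x ≠ uB l) (h4 : ∀ j l, uC j ≠ uB l) :
    ∑ j, tt c (uC j) x *
        ((1 / ∏ l, gg c (uC j) (uB l)) * ∏ l ∈ univ.erase j, gg c (uC j) (uC l)) =
      (∏ l, hh c (uB l) x) / (∏ l, hh c (uC l) x) -
        (∏ l, gg c x (uC l)) / (∏ l, gg c x (uB l)) :=
  sum_t_Omega_general c hc a x uB uC huC h1 h2
end

section
/- Block determinant merging identity: for functions A_1,…,A_a and B_1,…,B_b of one variable and a set x̄ of a+b generic complex numbers, ∑_{x̄ ⇒ {x̄_I, x̄_II}, #x̄_I=a, #x̄_II=b} g(x̄_II, x̄_I) Δ_a(x̄_I) det_a(A_j(x_{I_k})) Δ_b(x̄_II) det_b(B_j(x_{II_k})) = Δ_{a+b}(x̄) det_{a+b} of the block matrix whose first a rows are A_j(x_k) and last b rows are B_j(x_k). -/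
/-!
For `S` of size `a`, let `σ_S` be the shuffle listing `S` and then `Sᶜ`, each increasingly.
Splitting the pairs `j > k` of `Δ_{a+b}(x ∘ σ_S)` by blocks gives
`g(x_II, x_I) Δ_a(x_I) Δ_b(x_II)`, and `Δ_{a+b}(x ∘ σ) = sign σ · Δ_{a+b}(x)` because the
underlying product of differences is a Vandermonde determinant. The identity thus reduces to the
Laplace expansion of the block determinant along its first `a` rows,
`det M = ∑_S sign σ_S · det (A-rows, columns S) · det (B-rows, columns Sᶜ)`, which holds because
every permutation factors uniquely as `σ_S` composed with a permutation preserving both blocks.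
-/

open Finset

open Equiv Equiv.Perm

lemma Fintype.sum_dite_zero {ι M : Type*} [Fintype ι] [AddCommMonoid M] (p : ι → Prop)
    [DecidablePred p] (f : ∀ i, p i → M) :
    ∑ i, (if h : p i then f i h else 0) = ∑ i : Subtype p, f i i.2 := by
  have off_support : ∑ i : {i // ¬p i}, (if h : p i then f i h else 0) = 0 :=
    Finset.sum_eq_zero fun i _ => dif_neg i.2
  rw [← Fintype.sum_subtype_add_sum_subtype p, off_support, add_zero]
  exact Finset.sum_congr rfl fun i _ => dif_pos i.2

lemma Fin.prod_prod_lt_add {M : Type*} [CommMonoid M] {a b : ℕ}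
    (f : Fin (a + b) → Fin (a + b) → M) :
    ∏ j, ∏ k ∈ univ.filter (· < j), f j k =
      (∏ j : Fin a, ∏ k ∈ univ.filter (· < j), f (Fin.castAdd b j) (Fin.castAdd b k)) *
      (∏ j : Fin b, ∏ k ∈ univ.filter (· < j), f (Fin.natAdd a j) (Fin.natAdd a k)) *
      ∏ j : Fin b, ∏ k : Fin a, f (Fin.natAdd a j) (Fin.castAdd b k) := by
  have not_right_lt_left (j : Fin a) (k : Fin b) : ¬ a + (k : ℕ) < j := by omega
  have left_lt_right (j : Fin b) (k : Fin a) : (k : ℕ) < a + j := by omega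
  simp only [prod_filter, Fin.prod_univ_add, Fin.lt_def, Fin.val_castAdd, Fin.val_natAdd,
    not_right_lt_left, left_lt_right, Nat.add_lt_add_iff_left, if_true, if_false, prod_const_one,
    one_mul, prod_mul_distrib]
  exact mul_right_comm _ _ _

lemma prod_prod_lt_sub_comp_perm {R : Type*} [CommRing R] {n : ℕ} (y : Fin n → R)
    (σ : Perm (Fin n)) :
    ∏ j, ∏ k ∈ univ.filter (· < j), (y (σ j) - y (σ k)) =
      sign σ * ∏ j, ∏ k ∈ univ.filter (· < j), (y j - y k) := by
  have prod_eq_det (z : Fin n → R) :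
      ∏ j, ∏ k ∈ univ.filter (· < j), (z j - z k) = (Matrix.vandermonde z).det := by
    rw [Matrix.det_vandermonde]
    exact prod_comm' (by simp)
  rw [prod_eq_det, prod_eq_det, ← Matrix.det_permute]
  rfl

namespace Finset

section LinearOrder

variable {α : Type*} [LinearOrder α] (S : Finset α) {m : ℕ} (h : S.card = m)

lemma prod_orderEmbOfFin {M : Type*} [CommMonoid M] (f : α → M) :
    ∏ k, f (S.orderEmbOfFin h k) = ∏ i ∈ S, f i := by
  conv_rhs => rw [← map_orderEmbOfFin_univ S h, prod_map]
  rfl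

lemma range_orderEmbOfFin_comp_perm (σ : Perm (Fin m)) :
    Set.range (fun k => S.orderEmbOfFin h (σ k)) = S := by
  rw [← range_orderEmbOfFin S h]
  exact σ.surjective.range_comp _

end LinearOrder

variable {a b : ℕ}

lemma card_compl_eq_of_card_eq {S : Finset (Fin (a + b))} (h : S.card = a) : Sᶜ.card = b := by
  simp [card_compl, h]

noncomputable def shufflePerm (S : Finset (Fin (a + b))) (h : S.card = a) : Perm (Fin (a + b)) :=
  finSumFinEquiv.symm.trans (finSumEquivOfFinset h (card_compl_eq_of_card_eq h))

@[simp] lemma shufflePerm_castAdd (S : Finset (Fin (a + b))) (h : S.card = a) (i : Fin a) :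
    shufflePerm S h (Fin.castAdd b i) = S.orderEmbOfFin h i := by
  simp [shufflePerm]

@[simp] lemma shufflePerm_natAdd (S : Finset (Fin (a + b))) (h : S.card = a) (i : Fin b) :
    shufflePerm S h (Fin.natAdd a i) = Sᶜ.orderEmbOfFin (card_compl_eq_of_card_eq h) i := by
  simp [shufflePerm]

end Finset

namespace Equiv.Perm

variable {a b : ℕ}

def finSumCongrHom : Perm (Fin a) × Perm (Fin b) →* Perm (Fin (a + b)) :=
  finSumFinEquiv.permCongrHom.toMonoidHom.comp (sumCongrHom (Fin a) (Fin b))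

@[simp] lemma finSumCongrHom_castAdd (π : Perm (Fin a) × Perm (Fin b)) (k : Fin a) :
    finSumCongrHom π (Fin.castAdd b k) = Fin.castAdd b (π.1 k) := by
  simp [finSumCongrHom, permCongrHom, permCongr_apply]

@[simp] lemma finSumCongrHom_natAdd (π : Perm (Fin a) × Perm (Fin b)) (k : Fin b) :
    finSumCongrHom π (Fin.natAdd a k) = Fin.natAdd a (π.2 k) := by
  simp [finSumCongrHom, permCongrHom, permCongr_apply]

lemma finSumCongrHom_injective : Function.Injective (finSumCongrHom (a := a) (b := b)) :=
  finSumFinEquiv.permCongrHom.injective.comp sumCongrHom_injective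

@[simp] lemma sign_finSumCongrHom (π : Perm (Fin a) × Perm (Fin b)) :
    sign (finSumCongrHom π) = sign π.1 * sign π.2 := by
  simp [finSumCongrHom, permCongrHom, sign_permCongr, sign_sumCongr]

end Equiv.Perm

namespace Matrix

variable {R : Type*} [CommRing R]

lemma det_eq_sum_sign_mul_prod {n : Type*} [Fintype n] [DecidableEq n] (M : Matrix n n R) :
    M.det = ∑ σ : Perm n, (sign σ : R) * ∏ i, M i (σ i) := by
  rw [← det_transpose, det_apply']
  rfl

variable {a b : ℕ}

lemma bijective_shufflePerm_mul_finSumCongrHom :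
    Function.Bijective fun p : {S : Finset (Fin (a + b)) // S.card = a} ×
        (Perm (Fin a) × Perm (Fin b)) => shufflePerm p.1.1 p.1.2 * finSumCongrHom p.2 := by
  rw [Fintype.bijective_iff_injective_and_card]
  constructor
  · rintro ⟨⟨S, hS⟩, π⟩ ⟨⟨T, hT⟩, ρ⟩ h
    have hST : S = T := by
      have := congrArg (fun σ : Perm (Fin (a + b)) => Set.range fun k => σ (Fin.castAdd b k)) h
      simpa [Perm.mul_apply, range_orderEmbOfFin_comp_perm] using this
    subst hST
    simpa using finSumCongrHom_injective (mul_left_cancel h)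
  · simp only [Fintype.card_prod, Fintype.card_perm, Fintype.card_finset_len, Fintype.card_fin]
    rw [← Nat.choose_mul_factorial_mul_factorial (Nat.le_add_right a b), Nat.add_sub_cancel_left,
      mul_assoc]

theorem det_eq_sum_shufflePerm (M : Matrix (Fin (a + b)) (Fin (a + b)) R) :
    M.det = ∑ S : {S : Finset (Fin (a + b)) // S.card = a}, (sign (shufflePerm S.1 S.2) : R) *
      ((M.submatrix (Fin.castAdd b) (S.1.orderEmbOfFin S.2)).det *
        (M.submatrix (Fin.natAdd a) (S.1ᶜ.orderEmbOfFin (card_compl_eq_of_card_eq S.2))).det) := by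
  rw [det_eq_sum_sign_mul_prod,
    ← bijective_shufflePerm_mul_finSumCongrHom.sum_comp (fun σ => (sign σ : R) * ∏ i, M i (σ i)),
    Fintype.sum_prod_type]
  refine sum_congr rfl fun ⟨S, h⟩ _ => ?_
  rw [det_eq_sum_sign_mul_prod, det_eq_sum_sign_mul_prod, sum_mul_sum, mul_sum,
    Fintype.sum_prod_type]
  refine sum_congr rfl fun σ _ => ?_
  rw [mul_sum]
  refine sum_congr rfl fun τ _ => ?_
  simp only [Fin.prod_univ_add, map_mul, sign_finSumCongrHom, Perm.mul_apply,
    finSumCongrHom_castAdd, finSumCongrHom_natAdd, shufflePerm_castAdd, shufflePerm_natAdd,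
    submatrix_apply, Units.val_mul, Int.cast_mul]
  ring

end Matrix

noncomputable def gDelta (c : ℂ) {n : ℕ} (y : Fin n → ℂ) : ℂ :=
  ∏ j, ∏ k ∈ univ.filter (· < j), gg c (y j) (y k)

lemma gDelta_comp_perm (c : ℂ) {n : ℕ} (y : Fin n → ℂ) (σ : Perm (Fin n)) :
    gDelta c (y ∘ σ) = sign σ * gDelta c y := by
  simp only [gDelta, gg, Function.comp_apply, prod_div_distrib, prod_prod_lt_sub_comp_perm]
  rcases Int.units_eq_one_or (sign σ) with hs | hs <;> simp [hs, div_neg]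

lemma gDelta_comp_shufflePerm (c : ℂ) {a b : ℕ} (x : Fin (a + b) → ℂ) (S : Finset (Fin (a + b)))
    (h : S.card = a) :
    (∏ i ∈ Sᶜ, ∏ i' ∈ S, gg c (x i) (x i')) * gDelta c (x ∘ S.orderEmbOfFin h) *
        gDelta c (x ∘ Sᶜ.orderEmbOfFin (card_compl_eq_of_card_eq h)) =
      sign (shufflePerm S h) * gDelta c x := by
  rw [← gDelta_comp_perm]
  unfold gDelta
  rw [Fin.prod_prod_lt_add]
  simp only [Function.comp_apply, shufflePerm_castAdd, shufflePerm_natAdd,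
    ← prod_orderEmbOfFin S h, ← prod_orderEmbOfFin Sᶜ (card_compl_eq_of_card_eq h)]
  ring

theorem block_det_merge (c : ℂ) (a b : ℕ)
    (A : Fin a → ℂ → ℂ) (B : Fin b → ℂ → ℂ)
    (x : Fin (a + b) → ℂ) :
    (∑ S : Finset (Fin (a + b)),
        if h : S.card = a then
          (∏ i ∈ Sᶜ, ∏ i' ∈ S, gg c (x i) (x i')) *
          ((∏ j, ∏ k ∈ univ.filter (fun k => k < j),
              gg c (x (S.orderEmbOfFin h j)) (x (S.orderEmbOfFin h k))) *
            Matrix.det (Matrix.of fun (j k : Fin a) => A j (x (S.orderEmbOfFin h k)))) *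
          ((∏ j : Fin b, ∏ k ∈ univ.filter (fun k => k < j),
              gg c (x (Sᶜ.orderEmbOfFin
                (by simp [Finset.card_compl, h]) j))
                (x (Sᶜ.orderEmbOfFin
                (by simp [Finset.card_compl, h]) k))) *
            Matrix.det (Matrix.of fun (j k : Fin b) =>
              B j (x (Sᶜ.orderEmbOfFin
                (by simp [Finset.card_compl, h]) k))))
        else 0) =
      (∏ j, ∏ k ∈ univ.filter (fun k => k < j), gg c (x j) (x k)) *
      Matrix.det (Matrix.of fun (i k : Fin (a + b)) =>
        Fin.addCases (motive := fun _ => ℂ)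
          (fun j => A j (x k)) (fun j => B j (x k)) i) := by
  rw [Matrix.det_eq_sum_shufflePerm, mul_sum, Fintype.sum_dite_zero]
  refine sum_congr rfl fun ⟨S, h⟩ _ => ?_
  have hΔ := gDelta_comp_shufflePerm c x S h
  simp only [gDelta, Function.comp_apply] at hΔ
  simp only [Matrix.submatrix, Matrix.of_apply, Fin.addCases_left, Fin.addCases_right]
  linear_combination (Matrix.of fun j k => A j (x (S.orderEmbOfFin h k))).det *
    (Matrix.of fun j k => B j (x (Sᶜ.orderEmbOfFin (card_compl_eq_of_card_eq h) k))).det * hΔ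
end
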